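/- Let N ≥ 2 and n_1, …, n_N ≥ 1 be integers, and let ρ^{(1)}, …, ρ^{(N)} be density operators, where ρ^{(i)} acts on registers A_i B^i_1 … B^i_{n_i} (that is, on n_i + 1 qubits). Let 𝓛 be the map 𝓛(ρ) = Σ_{y ∈ {0,1}^{N−1}} M_y ρ M_y†, where M_y = ( I_{A_1} ⊗ ⟨y|_{A_2…A_N} ⊗ (X^{y_1})^{⊗ n_2}_{B^2} ⊗ … ⊗ (X^{y_{N−1}})^{⊗ n_N}_{B^N} ⊗ I_{B^1} ) ( CNOT_N on A_1…A_N ⊗ I ). Then, writing N_tot = n_1 + … + n_N, ⟨GHZ_{1+N_tot}| 𝓛(ρ^{(1)} ⊗ … ⊗ ρ^{(N)}) |GHZ_{1+N_tot}⟩ = Σ_{z ∈ {0,1}^{N−1}} ⟨GHZ_{n_1+1}^{(z',0⃗)}| ρ^{(1)} |GHZ_{n_1+1}^{(z',0⃗)}⟩ · ∏_{i=1}^{N−1} ⟨GHZ_{n_{i+1}+1}^{(z_i,0⃗)}| ρ^{(i+1)} |GHZ_{n_{i+1}+1}^{(z_i,0⃗)}⟩, where z' = z_1 ⊕ … ⊕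 z_{N−1}. -/

import Mathlib

open Matrix
open scoped ComplexOrder

/-- Basis labels for the registers `A_1, …, A_N` together with the blocks
`B¹, …, Bᴺ`, where block `Bⁱ` consists of `n i` qubits (`N = N' + 2`). -/
abbrev FullBasis (N : ℕ) (n : Fin (N + 2) → ℕ) : Type :=
  (Fin (N + 2) → Fin 2) × ((i : Fin (N + 2)) → Fin (n i) → Fin 2)

/-- Basis labels for the output registers `A_1, B¹, …, Bᴺ`. -/
abbrev OutBasis (N : ℕ) (n : Fin (N + 2) → ℕ) : Type :=
  Fin 2 × ((i : Fin (N + 2)) → Fin (n i) → Fin 2)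

/-- Amplitude of the GHZ basis state `|GHZ_{m+1}^{(z, 0⃗)}⟩ = (Z^z ⊗ I)|GHZ_{m+1}⟩`
on one qubit together with an `m`-qubit block. -/
noncomputable def ghzBasis0 (m : ℕ) (z : Fin 2) : Fin 2 × (Fin m → Fin 2) → ℂ := fun u =>
  ((if u.1 = 0 ∧ (∀ j, u.2 j = 0) then 1 else 0) +
      (if u.1 = 1 ∧ (∀ j, u.2 j = 1) then (-1 : ℂ) ^ z.val else 0)) / (Real.sqrt 2 : ℂ)

/-- Amplitude of the big GHZ state `|GHZ_{1 + N_tot}⟩` on registers `A_1, B¹, …, Bᴺ`. -/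
noncomputable def ghzBig (N : ℕ) (n : Fin (N + 2) → ℕ) : OutBasis N n → ℂ := fun u =>
  ((if u.1 = 0 ∧ (∀ i j, u.2 i j = 0) then 1 else 0) +
      (if u.1 = 1 ∧ (∀ i j, u.2 i j = 1) then 1 else 0)) / (Real.sqrt 2 : ℂ)

/-- `CNOT_N ⊗ I`: the operator `|0⟩⟨0| ⊗ I^{⊗(N-1)} + |1⟩⟨1| ⊗ X^{⊗(N-1)}` on the
registers `A_1, …, A_N` (control `A_1`), identity on all `B` blocks. -/
noncomputable def cnotA (N : ℕ) (n : Fin (N + 2) → ℕ) :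
    Matrix (FullBasis N n) (FullBasis N n) ℂ :=
  Matrix.of fun p q =>
    if p.2 = q.2 ∧ p.1 0 = q.1 0 ∧ (∀ i, i ≠ 0 → p.1 i = q.1 i + q.1 0)
    then (1 : ℂ) else 0

/-- The correction operator `⊗_{i=1}^{N-1} (X^{y_i})^{⊗ n_{i+1}}` applied to the
qubits of block `B^{i+1}` (identity on block `B¹` and on the `A` registers). -/
noncomputable def xCorr (N : ℕ) (n : Fin (N + 2) → ℕ) (y : Fin (N + 1) → Fin 2) :
    Matrix (FullBasis N n) (FullBasis N n) ℂ :=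
  Matrix.of fun p q =>
    if p.1 = q.1 ∧ (∀ i j, p.2 i j = q.2 i j + (Fin.cons 0 y : Fin (N + 2) → Fin 2) i)
    then (1 : ℂ) else 0

/-- The Kraus operator
`M_y = (I_{A_1} ⊗ ⟨y|_{A_2 ⋯ A_N} ⊗ (X^{y_1})^{⊗ n_2}_{B²} ⊗ ⋯ ⊗ (X^{y_{N-1}})^{⊗ n_N}_{Bᴺ} ⊗ I_{B¹})(CNOT_N ⊗ I)`. -/
noncomputable def krausM (N : ℕ) (n : Fin (N + 2) → ℕ) (y : Fin (N + 1) → Fin 2) :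
    Matrix (OutBasis N n) (FullBasis N n) ℂ :=
  Matrix.of fun o p => (xCorr N n y * cnotA N n) ((Fin.cons o.1 y, o.2)) p

/-- The tensor product `ρ⁽¹⁾ ⊗ ⋯ ⊗ ρ⁽ᴺ⁾`, where `ρ⁽ⁱ⁾` acts on `A_i Bⁱ`. -/
noncomputable def prodState (N : ℕ) (n : Fin (N + 2) → ℕ)
    (ρ : (i : Fin (N + 2)) →
      Matrix (Fin 2 × (Fin (n i) → Fin 2)) (Fin 2 × (Fin (n i) → Fin 2)) ℂ) :
    Matrix (FullBasis N n) (FullBasis N n) ℂ :=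
  Matrix.of fun p q => ∏ i, ρ i (p.1 i, p.2 i) (q.1 i, q.2 i)

/-- The overlap `⟨GHZ_{m+1}^{(z,0⃗)}| σ |GHZ_{m+1}^{(z,0⃗)}⟩`. -/
noncomputable def ghzOverlap (m : ℕ) (z : Fin 2)
    (σ : Matrix (Fin 2 × (Fin m → Fin 2)) (Fin 2 × (Fin m → Fin 2)) ℂ) : ℂ :=
  star (ghzBasis0 m z) ⬝ᵥ σ.mulVec (ghzBasis0 m z)

/-! Each Kraus operator `M_y` is the partial permutation matrix of an injection of basis
labels (`fusionMap y`), so `⟨GHZ|M_y ρ M_y†|GHZ⟩` only involves the entries of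
`ρ⁽¹⁾ ⊗ ⋯ ⊗ ρ⁽ᴺ⁾` between the two GHZ branches `|0…0⟩, |1…1⟩` of each factor, translated by `y`.
Writing `sᵢ` for the sum of the two branch populations of `ρ⁽ⁱ⁾` and `dᵢ` for the sum of its two
branch coherences, the sum over `y` factorises into `(∏ sᵢ + ∏ dᵢ) / 2`. On the other side
`⟨GHZ^{(z,0⃗)}|ρ⁽ⁱ⁾|GHZ^{(z,0⃗)}⟩ = (sᵢ + (-1)^z dᵢ) / 2`, and summing over `z` with the parity
`z' = z₁ ⊕ ⋯ ⊕ z_{N-1}` on the first factor cancels every mixed term, leaving the same value. -/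

open Finset

lemma Matrix.one_submatrix_id_mul {l m n α : Type*} [Fintype m] [DecidableEq m]
    [NonAssocSemiring α] (f : l → m) (A : Matrix m n α) :
    (1 : Matrix m m α).submatrix f id * A = A.submatrix f id := by
  simpa using (submatrix_mul 1 A f id id Function.bijective_id).symm

lemma Matrix.mul_one_submatrix_id {l m n α : Type*} [Fintype n] [DecidableEq n]
    [NonAssocSemiring α] (f : l → n) (A : Matrix m n α) :
    A * (1 : Matrix n n α).submatrix id f = A.submatrix id f := by
  simpa using (submatrix_mul A 1 id id f Function.bijective_id).symm

lemma Matrix.one_submatrix_mul_mul_conjTranspose {l m α : Type*} [Fintype m] [DecidableEq m]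
    [Semiring α] [StarRing α] (f : l → m) (P : Matrix m m α) :
    (1 : Matrix m m α).submatrix f id * P * ((1 : Matrix m m α).submatrix f id)ᴴ =
      P.submatrix f f := by
  rw [one_submatrix_id_mul, conjTranspose_submatrix, conjTranspose_one, mul_one_submatrix_id,
    submatrix_submatrix]
  rfl

lemma fin_two_add_self (a : Fin 2) : a + a = 0 := by
  decide +revert

lemma fin_two_eq_add_iff_add_eq (a b c : Fin 2) : a = b + c ↔ a + c = b := by
  decide +revert

section SignSums

variable {R ι : Type*} [CommRing R]

lemma neg_one_pow_val_sum (s : Finset ι) (z : ι → Fin 2) :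
    (-1 : R) ^ (∑ i ∈ s, z i).val = ∏ i ∈ s, (-1 : R) ^ (z i).val := by
  classical
  induction s using Finset.induction_on with
  | empty => simp
  | insert a s ha ih =>
    rw [sum_insert ha, prod_insert ha, Fin.val_add, ← neg_one_pow_eq_pow_mod_two, pow_add, ih]

variable [Fintype ι] [DecidableEq ι]

lemma sum_sum_sum_mul_prod_shift (r₀ : Fin 2 → Fin 2 → R) (r : ι → Fin 2 → Fin 2 → R) :
    ∑ y : ι → Fin 2, ∑ a, ∑ b, r₀ a b * ∏ k, r k (a + y k) (b + y k) =
      (r₀ 0 0 + r₀ 1 1) * ∏ k, (r k 0 0 + r k 1 1) +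
        (r₀ 0 1 + r₀ 1 0) * ∏ k, (r k 0 1 + r k 1 0) := by
  have hshift : ∀ (f : Fin 2 → Fin 2 → R) (a b : Fin 2), ∑ u, f (a + u) (b + u) =
      if a = b then f 0 0 + f 1 1 else f 0 1 + f 1 0 := by
    intro f a b
    fin_cases a <;> fin_cases b <;> simp [Fin.sum_univ_two] <;> ring
  have hy : ∀ a b, ∑ y : ι → Fin 2, r₀ a b * ∏ k, r k (a + y k) (b + y k) =
      r₀ a b * ∏ k, ∑ u, r k (a + u) (b + u) := by
    intro a b
    rw [← mul_sum, Fintype.prod_sum (fun k u => r k (a + u) (b + u))]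
  rw [sum_comm]
  simp_rw [sum_comm (γ := ι → Fin 2), hy]
  simp only [hshift, prod_ite_irrel, mul_ite, Fin.sum_univ_two, if_pos, zero_ne_one, one_ne_zero,
    if_false]
  ring

lemma sum_signed_mul_prod_signed (s₀ d₀ : R) (s d : ι → R) :
    ∑ z : ι → Fin 2, (s₀ + (-1) ^ (∑ k, z k).val * d₀) * ∏ k, (s k + (-1) ^ (z k).val * d k) =
      2 ^ Fintype.card ι * (s₀ * ∏ k, s k + d₀ * ∏ k, d k) := by
  have hflip : ∀ z : ι → Fin 2,
      (-1 : R) ^ (∑ k, z k).val * ∏ k, (s k + (-1) ^ (z k).val * d k) =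
        ∏ k, ((-1) ^ (z k).val * s k + d k) := by
    intro z
    rw [neg_one_pow_val_sum, ← prod_mul_distrib]
    refine prod_congr rfl fun k _ => ?_
    have hsq : ((-1 : R) ^ (z k).val) * (-1) ^ (z k).val = 1 := by
      rw [← mul_pow, neg_one_mul, neg_neg, one_pow]
    linear_combination d k * hsq
  have hexp : ∀ z : ι → Fin 2,
      (s₀ + (-1) ^ (∑ k, z k).val * d₀) * ∏ k, (s k + (-1) ^ (z k).val * d k) =
        s₀ * ∏ k, (s k + (-1) ^ (z k).val * d k) + d₀ * ∏ k, ((-1) ^ (z k).val * s k + d k) := by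
    intro z
    rw [← hflip]
    ring
  have hs : ∀ k, ∑ u : Fin 2, (s k + (-1) ^ u.val * d k) = 2 * s k := fun k => by
    rw [Fin.sum_univ_two, Fin.val_zero, Fin.val_one, pow_zero, pow_one]; ring
  have hd : ∀ k, ∑ u : Fin 2, ((-1) ^ u.val * s k + d k) = 2 * d k := fun k => by
    rw [Fin.sum_univ_two, Fin.val_zero, Fin.val_one, pow_zero, pow_one]; ring
  rw [sum_congr rfl fun z _ => hexp z, sum_add_distrib, ← mul_sum, ← mul_sum,
    ← Fintype.prod_sum (fun k (u : Fin 2) => s k + (-1) ^ u.val * d k),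
    ← Fintype.prod_sum (fun k (u : Fin 2) => (-1) ^ u.val * s k + d k)]
  simp only [hs, hd, prod_mul_distrib, prod_const, card_univ]
  ring

lemma sum_half_signed_mul_prod_half_signed {K : Type*} [Field K] [NeZero (2 : K)]
    (s₀ d₀ : K) (s d : ι → K) :
    ∑ z : ι → Fin 2, (s₀ + (-1) ^ (∑ k, z k).val * d₀) / 2 *
        ∏ k, (s k + (-1) ^ (z k).val * d k) / 2 =
      (s₀ * ∏ k, s k + d₀ * ∏ k, d k) / 2 := by
  simp_rw [prod_div_distrib, prod_const, card_univ, div_mul_div_comm, ← sum_div,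
    sum_signed_mul_prod_signed]
  field_simp

end SignSums

section TwoBranchStates

variable {α : Type*} [Fintype α] [DecidableEq α]

noncomputable def twoBranchState (e₀ e₁ : α) (k : ℕ) : α → ℂ :=
  ((Real.sqrt 2 : ℂ))⁻¹ • (Pi.single e₀ 1 + Pi.single e₁ ((-1) ^ k))

lemma star_twoBranchState_dotProduct_mulVec (M : Matrix α α ℂ) (e₀ e₁ : α) (k : ℕ) :
    star (twoBranchState e₀ e₁ k) ⬝ᵥ M *ᵥ twoBranchState e₀ e₁ k =
      (M e₀ e₀ + M e₁ e₁ + (-1) ^ k * (M e₀ e₁ + M e₁ e₀)) / 2 := by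
  have hstar : star ((Real.sqrt 2 : ℂ))⁻¹ = ((Real.sqrt 2 : ℂ))⁻¹ := by simp
  have h2 : ((Real.sqrt 2 : ℂ))⁻¹ ^ 2 = 1 / 2 := by
    rw [inv_pow, ← Complex.ofReal_pow, Real.sq_sqrt zero_le_two]; norm_num
  have hsq : (-1 : ℂ) ^ (k * 2) = 1 := by rw [pow_mul', neg_one_sq, one_pow]
  simp only [twoBranchState, star_smul, star_add, Pi.star_single, star_one, star_pow, star_neg,
    hstar, smul_dotProduct, add_dotProduct, single_dotProduct, mulVec, dotProduct_smul,
    dotProduct_add, dotProduct_single, smul_eq_mul]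
  linear_combination (M e₀ e₀ + M e₁ e₁ + (-1) ^ k * (M e₀ e₁ + M e₁ e₀)) * h2 +
    ((Real.sqrt 2 : ℂ))⁻¹ ^ 2 * M e₁ e₁ * hsq

end TwoBranchStates

def ghzBranch (m : ℕ) (a : Fin 2) : Fin 2 × (Fin m → Fin 2) := (a, fun _ => a)

lemma ghzBasis0_eq_twoBranchState (m : ℕ) (z : Fin 2) :
    ghzBasis0 m z = twoBranchState (ghzBranch m 0) (ghzBranch m 1) z.val := by
  funext u
  simp [ghzBasis0, twoBranchState, ghzBranch, Pi.single_apply, Prod.ext_iff, funext_iff,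
    div_eq_inv_mul]

lemma ghzOverlap_eq (m : ℕ) (z : Fin 2)
    (σ : Matrix (Fin 2 × (Fin m → Fin 2)) (Fin 2 × (Fin m → Fin 2)) ℂ) :
    ghzOverlap m z σ =
      (σ (ghzBranch m 0) (ghzBranch m 0) + σ (ghzBranch m 1) (ghzBranch m 1) +
        (-1) ^ z.val *
          (σ (ghzBranch m 0) (ghzBranch m 1) + σ (ghzBranch m 1) (ghzBranch m 0))) / 2 := by
  rw [ghzOverlap, ghzBasis0_eq_twoBranchState, star_twoBranchState_dotProduct_mulVec]

section FusionKraus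

variable {N : ℕ} {n : Fin (N + 2) → ℕ}

lemma ghzBig_eq_twoBranchState :
    ghzBig N n = twoBranchState (0, fun _ _ => 0) (1, fun _ _ => 1) 0 := by
  funext u
  simp [ghzBig, twoBranchState, Pi.single_apply, Prod.ext_iff, funext_iff, div_eq_inv_mul]

def fusionMap (y : Fin (N + 1) → Fin 2) (o : OutBasis N n) : FullBasis N n :=
  (fun i => o.1 + (Fin.cons 0 y : Fin (N + 2) → Fin 2) i,
    fun i j => o.2 i j + (Fin.cons 0 y : Fin (N + 2) → Fin 2) i)

lemma xCorr_eq_submatrix (y : Fin (N + 1) → Fin 2) :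
    xCorr N n y = (1 : Matrix (FullBasis N n) (FullBasis N n) ℂ).submatrix
      (fun p => (p.1, fun i j => p.2 i j + (Fin.cons 0 y : Fin (N + 2) → Fin 2) i)) id := by
  ext p q
  simp [xCorr, one_apply, Prod.ext_iff, funext_iff, fin_two_eq_add_iff_add_eq]

lemma cnotA_eq_submatrix :
    cnotA N n = (1 : Matrix (FullBasis N n) (FullBasis N n) ℂ).submatrix
      (fun p => (Fin.cons (p.1 0) fun k => p.1 k.succ + p.1 0, p.2)) id := by
  ext p q
  simp only [cnotA, of_apply, submatrix_apply, id, one_apply]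
  congr 1
  apply propext
  constructor
  · rintro ⟨h2, h0, h⟩
    refine Prod.ext (funext fun i => ?_) h2
    cases i using Fin.cases with
    | zero => simpa using h0
    | succ k => simp [h _ k.succ_ne_zero, h0, add_assoc, fin_two_add_self]
  · rintro rfl
    refine ⟨rfl, by simp, fun i hi => ?_⟩
    obtain ⟨k, rfl⟩ := Fin.exists_succ_eq.mpr hi
    simp [add_assoc, fin_two_add_self]

lemma krausM_eq_submatrix (y : Fin (N + 1) → Fin 2) :
    krausM N n y = (1 : Matrix (FullBasis N n) (FullBasis N n) ℂ).submatrix (fusionMap y) id := by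
  ext o p
  rw [krausM, of_apply, xCorr_eq_submatrix, cnotA_eq_submatrix, one_submatrix_id_mul]
  refine congrArg (fun r => (1 : Matrix (FullBasis N n) (FullBasis N n) ℂ) r p) (Prod.ext ?_ rfl)
  funext i
  cases i using Fin.cases <;> simp [fusionMap, add_comm]

lemma prodState_fusionMap
    (ρ : (i : Fin (N + 2)) →
      Matrix (Fin 2 × (Fin (n i) → Fin 2)) (Fin 2 × (Fin (n i) → Fin 2)) ℂ)
    (y : Fin (N + 1) → Fin 2) (a b : Fin 2) :
    prodState N n ρ (fusionMap y (a, fun _ _ => a)) (fusionMap y (b, fun _ _ => b)) =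
      ρ 0 (ghzBranch _ a) (ghzBranch _ b) *
        ∏ k, ρ k.succ (ghzBranch _ (a + y k)) (ghzBranch _ (b + y k)) := by
  rw [prodState, of_apply, Fin.prod_univ_succ]
  simp [fusionMap, ghzBranch]

lemma star_ghzBig_dotProduct_krausM_conj_mulVec
    (ρ : (i : Fin (N + 2)) →
      Matrix (Fin 2 × (Fin (n i) → Fin 2)) (Fin 2 × (Fin (n i) → Fin 2)) ℂ)
    (y : Fin (N + 1) → Fin 2) :
    star (ghzBig N n) ⬝ᵥ (krausM N n y * prodState N n ρ * (krausM N n y)ᴴ) *ᵥ ghzBig N n =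
      (∑ a, ∑ b, ρ 0 (ghzBranch _ a) (ghzBranch _ b) *
        ∏ k, ρ k.succ (ghzBranch _ (a + y k)) (ghzBranch _ (b + y k))) / 2 := by
  rw [krausM_eq_submatrix, one_submatrix_mul_mul_conjTranspose, ghzBig_eq_twoBranchState,
    star_twoBranchState_dotProduct_mulVec]
  simp only [submatrix_apply, prodState_fusionMap, Fin.sum_univ_two]
  ring

end FusionKraus

theorem fidelity_after_star_fusion_general (N : ℕ) (n : Fin (N + 2) → ℕ)
    (ρ : (i : Fin (N + 2)) →
      Matrix (Fin 2 × (Fin (n i) → Fin 2)) (Fin 2 × (Fin (n i) → Fin 2)) ℂ) :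
    star (ghzBig N n) ⬝ᵥ
        (∑ y : Fin (N + 1) → Fin 2,
            krausM N n y * prodState N n ρ * (krausM N n y)ᴴ).mulVec (ghzBig N n)
      = ∑ z : Fin (N + 1) → Fin 2,
          ghzOverlap (n 0) (∑ i, z i) (ρ 0) *
            ∏ i : Fin (N + 1), ghzOverlap (n i.succ) (z i) (ρ i.succ) := by
  rw [sum_mulVec, dotProduct_sum]
  simp only [star_ghzBig_dotProduct_krausM_conj_mulVec, ghzOverlap_eq]
  rw [← sum_div, sum_sum_sum_mul_prod_shift (fun a b => ρ 0 (ghzBranch _ a) (ghzBranch _ b))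
    (fun (k : Fin (N + 1)) a b => ρ k.succ (ghzBranch _ a) (ghzBranch _ b)),
    sum_half_signed_mul_prod_half_signed]

/-- **Fidelity after the star fusion of `N` noisy GHZ states (Protocol 6).**
For `N ≥ 2` (written `N + 2`) and block sizes `n i ≥ 1`, if `ρ⁽ⁱ⁾` are density
operators on `A_i Bⁱ`, then with `𝓛(ρ) = ∑_y M_y ρ M_y†`,
`⟨GHZ_{1+N_tot}| 𝓛(ρ⁽¹⁾ ⊗ ⋯ ⊗ ρ⁽ᴺ⁾) |GHZ_{1+N_tot}⟩
  = ∑_{z ∈ {0,1}^{N-1}} ⟨GHZ_{n₁+1}^{(z',0⃗)}|ρ⁽¹⁾|GHZ_{n₁+1}^{(z',0⃗)}⟩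
      ∏_{i=1}^{N-1} ⟨GHZ_{n_{i+1}+1}^{(z_i,0⃗)}|ρ⁽ⁱ⁺¹⁾|GHZ_{n_{i+1}+1}^{(z_i,0⃗)}⟩`,
with `z' = z₁ ⊕ ⋯ ⊕ z_{N-1}`. -/
theorem fidelity_after_star_fusion (N : ℕ) (n : Fin (N + 2) → ℕ) (hn : ∀ i, 1 ≤ n i)
    (ρ : (i : Fin (N + 2)) →
      Matrix (Fin 2 × (Fin (n i) → Fin 2)) (Fin 2 × (Fin (n i) → Fin 2)) ℂ)
    (hpsd : ∀ i, (ρ i).PosSemidef) (htr : ∀ i, (ρ i).trace = 1) :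
    star (ghzBig N n) ⬝ᵥ
        (∑ y : Fin (N + 1) → Fin 2,
            krausM N n y * prodState N n ρ * (krausM N n y)ᴴ).mulVec (ghzBig N n)
      = ∑ z : Fin (N + 1) → Fin 2,
          ghzOverlap (n 0) (∑ i, z i) (ρ 0) *
            ∏ i : Fin (N + 1), ghzOverlap (n i.succ) (z i) (ρ i.succ) :=
  fidelity_after_star_fusion_general N n ρ
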